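/- Let A be a finite connected graph with vertex set Q and let T = T_A be its universal covering tree. For vertices v₁, v₂ of T the following are equivalent: (i) the rooted trees T_{v₁} and T_{v₂} are isomorphic; (ii) for every d ∈ ℕ the truncated trees T_{v₁}^{(d)} and T_{v₂}^{(d)} are isomorphic; (iii) T_{v₁}^{(d)} and T_{v₂}^{(d)} are isomorphic for some d ≥ (|Q|+1)². -/

import Mathlib

/-- A rooted directed multigraph. -/
structure RGraph where
  V : Type
  E : Type
  s : E → V
  t : E → V
  root : V

namespace RGraph

/-- `l` is a path: consecutive edges are composable. -/
def IsPath (A : RGraph) (l : List A.E) : Prop :=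
  l.Chain' (fun e f => A.t e = A.s f)

/-- `l` is a path starting at the vertex `q`. -/
def PathFrom (A : RGraph) (q : A.V) (l : List A.E) : Prop :=
  A.IsPath l ∧ ∀ e ∈ l.head?, A.s e = q

/-- The target of the path `l` started at `q` (equal to `q` for the empty path). -/
def pathTarget (A : RGraph) (q : A.V) (l : List A.E) : A.V :=
  l.foldl (fun _ e => A.t e) q

@[simp] lemma pathTarget_nil (A : RGraph) (q : A.V) : A.pathTarget q [] = q := rfl

@[simp] lemma pathTarget_cons (A : RGraph) (q : A.V) (a : A.E) (l : List A.E) :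
    A.pathTarget q (a :: l) = A.pathTarget (A.t a) l := rfl

lemma pathTarget_append (A : RGraph) (q : A.V) (l l' : List A.E) :
    A.pathTarget q (l ++ l') = A.pathTarget (A.pathTarget q l) l' := by
  simp [pathTarget]

@[simp] lemma pathTarget_append_single (A : RGraph) (q : A.V) (l : List A.E) (e : A.E) :
    A.pathTarget q (l ++ [e]) = A.t e := by
  rw [pathTarget_append]; rfl

lemma pathFrom_nil (A : RGraph) (q : A.V) : A.PathFrom q [] :=
  ⟨List.isChain_nil, by simp⟩

lemma pathTarget_getLast {A : RGraph} {q : A.V} {l : List A.E} {x : A.E}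
    (hx : x ∈ l.getLast?) : A.pathTarget q l = A.t x := by
  induction l generalizing q with
  | nil => simp at hx
  | cons a l ih =>
    cases l with
    | nil => simp at hx; subst hx; rfl
    | cons b l =>
      rw [List.getLast?_cons_cons] at hx
      simpa using ih (q := A.t a) hx

lemma pathFrom_append_single {A : RGraph} {q : A.V} {l : List A.E} {e : A.E}
    (h : A.PathFrom q l) (he : A.s e = A.pathTarget q l) :
    A.PathFrom q (l ++ [e]) := by
  constructor
  · apply List.isChain_append.mpr
    refine ⟨h.1, List.isChain_singleton _, ?_⟩
    intro x hx y hy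
    simp at hy
    subst hy
    rw [he]
    exact (pathTarget_getLast hx).symm
  · intro f hf
    cases l with
    | nil =>
      simp at hf
      subst hf
      simpa using he
    | cons a l =>
      simp at hf
      subst hf
      exact h.2 a (by simp)

/-- `w` is reachable from `q` by an oriented path. -/
def Reach (A : RGraph) (q w : A.V) : Prop :=
  ∃ l, A.PathFrom q l ∧ A.pathTarget q l = w

lemma reach_self (A : RGraph) (q : A.V) : A.Reach q q :=
  ⟨[], A.pathFrom_nil q, rfl⟩

lemma reach_target {A : RGraph} {q : A.V} {e : A.E} (h : A.Reach q (A.s e)) :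
    A.Reach q (A.t e) := by
  obtain ⟨l, hl, ht⟩ := h
  exact ⟨l ++ [e], pathFrom_append_single hl ht.symm, by simp⟩

/-- A graph is connected (as a rooted directed graph) if every vertex is reachable
from the root. -/
def Connected (A : RGraph) : Prop := ∀ w : A.V, A.Reach A.root w

/-- A graph is a tree if the target map from paths emanating from the root to
vertices is a bijection. -/
def IsTree (A : RGraph) : Prop :=
  Function.Bijective
    (fun l : {l : List A.E // A.PathFrom A.root l} => A.pathTarget A.root l.1)

/-- A graph is locally finite if every vertex has finitely many outgoing edges. -/
def LocallyFinite (A : RGraph) : Prop := ∀ q : A.V, Finite {e : A.E // A.s e = q}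

/-- Adjacency: there is an edge from `v` to `w`. -/
def Adj (A : RGraph) (v w : A.V) : Prop := ∃ e, A.s e = v ∧ A.t e = w

/-- The induced rooted subgraph on all vertices reachable from `q` (the "cone" at `q`). -/
def subgraph (A : RGraph) (q : A.V) : RGraph where
  V := {w // A.Reach q w}
  E := {e // A.Reach q (A.s e)}
  s := fun e => ⟨A.s e.1, e.2⟩
  t := fun e => ⟨A.t e.1, reach_target e.2⟩
  root := ⟨q, A.reach_self q⟩

/-- The truncation of the cone at `v` to vertices at distance at most `d` from `v`. -/
def trunc (A : RGraph) (v : A.V) (d : ℕ) : RGraph where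
  V := {w // ∃ l, A.PathFrom v l ∧ A.pathTarget v l = w ∧ l.length ≤ d}
  E := {e // ∃ l, A.PathFrom v l ∧ A.pathTarget v l = A.s e ∧ l.length < d}
  s := fun e => ⟨A.s e.1, e.2.imp fun _ h => ⟨h.1, h.2.1, h.2.2.le⟩⟩
  t := fun e => ⟨A.t e.1, by
    obtain ⟨l, h1, h2, h3⟩ := e.2
    exact ⟨l ++ [e.1], pathFrom_append_single h1 h2.symm, by simp,
      by simp only [List.length_append, List.length_singleton]; omega⟩⟩
  root := ⟨v, [], A.pathFrom_nil v, rfl, Nat.zero_le d⟩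

/-- The universal covering tree of `A`: vertices are the paths emanating from the root. -/
def cover (A : RGraph) : RGraph where
  V := {l : List A.E // A.PathFrom A.root l}
  E := {x : {l : List A.E // A.PathFrom A.root l} × A.E //
          A.s x.2 = A.pathTarget A.root x.1.1}
  s := fun x => x.1.1
  t := fun x => ⟨x.1.1.1 ++ [x.1.2], pathFrom_append_single x.1.1.2 x.2⟩
  root := ⟨[], A.pathFrom_nil _⟩

end RGraph

/-- A morphism of rooted directed multigraphs. -/
structure GraphHom (A B : RGraph) where
  v : A.V → B.V
  e : A.E → B.E
  root_eq : v A.root = B.root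
  s_eq : ∀ x, B.s (e x) = v (A.s x)
  t_eq : ∀ x, B.t (e x) = v (A.t x)

namespace GraphHom

variable {A B : RGraph}

/-- The unique path lifting property. -/
def UPLP (p : GraphHom A B) : Prop :=
  ∀ (q : A.V) (l' : List B.E), B.PathFrom (p.v q) l' →
    ∃! l : List A.E, A.PathFrom q l ∧ l.map p.e = l'

/-- A covering morphism: surjective on vertices, with the unique path lifting property. -/
def IsCovering (p : GraphHom A B) : Prop := Function.Surjective p.v ∧ p.UPLP

/-- An isomorphism of graphs: bijective on vertices and on edges. -/
def IsIso (p : GraphHom A B) : Prop := Function.Bijective p.v ∧ Function.Bijective p.e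

/-- The restriction of the edge map to the edges emanating from `q`. -/
def outMap (p : GraphHom A B) (q : A.V) :
    {e : A.E // A.s e = q} → {e' : B.E // B.s e' = p.v q} :=
  fun e => ⟨p.e e.1, by rw [p.s_eq, e.2]⟩

lemma isPath_map (p : GraphHom A B) {l : List A.E} (h : A.IsPath l) :
    B.IsPath (l.map p.e) := by
  simp only [RGraph.IsPath, List.Chain'] at h ⊢
  rw [List.isChain_map]
  exact List.IsChain.imp (fun a b hab => by rw [p.t_eq, p.s_eq, hab]) h

lemma pathFrom_map (p : GraphHom A B) {q : A.V} {l : List A.E} (h : A.PathFrom q l) :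
    B.PathFrom (p.v q) (l.map p.e) := by
  refine ⟨p.isPath_map h.1, ?_⟩
  intro f hf
  cases l with
  | nil => simp at hf
  | cons a l =>
    simp at hf
    subst hf
    rw [p.s_eq, h.2 a (by simp)]

lemma pathTarget_map (p : GraphHom A B) (q : A.V) (l : List A.E) :
    B.pathTarget (p.v q) (l.map p.e) = p.v (A.pathTarget q l) := by
  induction l generalizing q with
  | nil => rfl
  | cons a l ih =>
    show B.pathTarget (B.t (p.e a)) (l.map p.e) = _
    rw [p.t_eq]
    exact ih (A.t a)

lemma reach_map (p : GraphHom A B) {q w : A.V} (h : A.Reach q w) :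
    B.Reach (p.v q) (p.v w) := by
  obtain ⟨l, hl, ht⟩ := h
  exact ⟨l.map p.e, p.pathFrom_map hl, by rw [p.pathTarget_map, ht]⟩

end GraphHom

/-- Two graphs are isomorphic. -/
def RGraph.Iso (A B : RGraph) : Prop := ∃ p : GraphHom A B, p.IsIso

/-- The universal covering morphism from the universal covering tree of `A` to `A`. -/
def RGraph.uCover (A : RGraph) : GraphHom A.cover A where
  v := fun l => A.pathTarget A.root l.1
  e := fun x => x.1.2
  root_eq := rfl
  s_eq := fun x => x.2
  t_eq := fun x => by
    show A.t x.1.2 = A.pathTarget A.root (x.1.1.1 ++ [x.1.2])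
    simp

/-- The morphism induced between universal covering trees by a morphism of graphs. -/
def GraphHom.coverMap {A B : RGraph} (p : GraphHom A B) : GraphHom A.cover B.cover where
  v := fun l => ⟨l.1.map p.e, by have := p.pathFrom_map l.2; rwa [p.root_eq] at this⟩
  e := fun x =>
    ⟨(⟨x.1.1.1.map p.e, by have := p.pathFrom_map x.1.1.2; rwa [p.root_eq] at this⟩,
      p.e x.1.2), by
        show B.s (p.e x.1.2) = B.pathTarget B.root (x.1.1.1.map p.e)
        rw [p.s_eq, x.2, ← p.root_eq, p.pathTarget_map]⟩
  root_eq := Subtype.ext rfl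
  s_eq := fun _ => rfl
  t_eq := fun x => by
    apply Subtype.ext
    simp [RGraph.cover]

/-- `A` is a covering quotient of `T`. -/
def IsCovQuotient (T A : RGraph) : Prop := ∃ p : GraphHom T A, p.IsCovering

/-- `A` is a minimal covering quotient of `T`: a covering quotient with the minimal
number of vertices among all covering quotients of `T`. -/
def IsMinCovQuotient (T A : RGraph) : Prop :=
  IsCovQuotient T A ∧
    ∀ B : RGraph, IsCovQuotient T B → Cardinal.mk A.V ≤ Cardinal.mk B.V

/-- `T` has finitely many cone types. -/
def FinManyCones (T : RGraph) : Prop :=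
  ∃ S : Set T.V, S.Finite ∧ ∀ v : T.V, ∃ w ∈ S, RGraph.Iso (T.subgraph v) (T.subgraph w)

/-- A self-similar tree: a locally finite tree with finitely many cone types. -/
def SelfSimilarTree (T : RGraph) : Prop := T.IsTree ∧ T.LocallyFinite ∧ FinManyCones T

namespace RGraph

/-- The automorphism group of a graph, realized as the group of root-preserving,
adjacency-preserving permutations of the vertex set (for trees this is the same as the
automorphism group in the sense of graph morphisms, since in a tree an edge is determined
by its endpoints). -/
def autGroup (T : RGraph) : Subgroup (Equiv.Perm T.V) where
  carrier := {g | g T.root = T.root ∧ ∀ v w, T.Adj v w ↔ T.Adj (g v) (g w)}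
  one_mem' := ⟨rfl, fun _ _ => Iff.rfl⟩
  mul_mem' := by
    rintro a b ⟨ha1, ha2⟩ ⟨hb1, hb2⟩
    refine ⟨?_, fun v w => ?_⟩
    · show a (b T.root) = T.root
      rw [hb1, ha1]
    · exact (hb2 v w).trans (ha2 (b v) (b w))
  inv_mem' := by
    rintro a ⟨ha1, ha2⟩
    refine ⟨?_, fun v w => ?_⟩
    · show a.symm T.root = T.root
      rw [Equiv.symm_apply_eq]
      exact ha1.symm
    · have h := ha2 (a⁻¹ v) (a⁻¹ w)
      simpa using h.symm

/-- The subgroup of permutations of the vertices fixing every vertex outside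
of the cone at `v`. -/
def fixOutside (T : RGraph) (v : T.V) : Subgroup (Equiv.Perm T.V) where
  carrier := {g | ∀ w, ¬ T.Reach v w → g w = w}
  one_mem' := fun _ _ => rfl
  mul_mem' := by
    intro a b ha hb w hw
    show a (b w) = w
    rw [hb w hw, ha w hw]
  inv_mem' := by
    intro a ha w hw
    show a.symm w = w
    rw [Equiv.symm_apply_eq]
    exact (ha w hw).symm

/-- The rigid stabilizer of the vertex `v`: automorphisms fixing every vertex
outside the subtree spanned by `v` and its descendants. -/
def rist (T : RGraph) (v : T.V) : Subgroup (Equiv.Perm T.V) :=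
  T.autGroup ⊓ T.fixOutside v

/-- The set of vertices at distance `n` from the root. -/
def level (T : RGraph) (n : ℕ) : Set T.V :=
  {v | ∃ l : List T.E, T.PathFrom T.root l ∧ T.pathTarget T.root l = v ∧ l.length = n}

/-- The `n`-th rigid level stabilizer: the subgroup generated by the rigid stabilizers
of the vertices at distance `n` from the root. -/
def ristLevel (T : RGraph) (n : ℕ) : Subgroup (Equiv.Perm T.V) :=
  ⨆ v ∈ T.level n, T.rist v

/-- The `n`-th rigid level stabilizer, as a subgroup of the automorphism group. -/
def ristIn (T : RGraph) (n : ℕ) : Subgroup ↥T.autGroup :=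
  (T.ristLevel n).comap T.autGroup.subtype

end RGraph

/-- A recurrent double edge: a pair of distinct parallel edges such that there is an
oriented loop which contains one of them, or from which their common source can be
reached. -/
def HasRecDoubleEdge (A : RGraph) : Prop :=
  ∃ e₁ e₂ : A.E, e₁ ≠ e₂ ∧ A.s e₁ = A.s e₂ ∧ A.t e₁ = A.t e₂ ∧
    ((∃ (q : A.V) (l : List A.E),
        A.PathFrom q l ∧ l ≠ [] ∧ A.pathTarget q l = q ∧ (e₁ ∈ l ∨ e₂ ∈ l)) ∨
     (∃ (q : A.V) (l : List A.E),
        A.PathFrom q l ∧ l ≠ [] ∧ A.pathTarget q l = q ∧ A.Reach q (A.s e₁)))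

/-- A deterministic finite automaton over the alphabet `A`, with a partial transition
function, a single initial state, and all states accepting. -/
structure PDFA (A : Type) where
  Q : Type
  finQ : Finite Q
  neQ : Nonempty Q
  δ : Q → A → Option Q
  init : Q

namespace PDFA

variable {A : Type} (M : PDFA A)

/-- Running the automaton from state `q` on a word; `none` if it gets stuck. -/
def run : M.Q → List A → Option M.Q
  | q, [] => some q
  | q, a :: w => (M.δ q a).bind fun q' => run q' w

/-- The regular language accepted by `M`. -/
def Lang : Set (List A) := {w | (M.run M.init w).isSome}

lemma run_append (q : M.Q) (u w : List A) :
    M.run q (u ++ w) = (M.run q u).bind fun q' => M.run q' w := by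
  induction u generalizing q with
  | nil => simp [run]
  | cons a u ih =>
    simp only [List.cons_append, run]
    cases M.δ q a with
    | none => simp
    | some q' => simp [ih]

lemma isSome_of_append {q : M.Q} {u w : List A}
    (h : (M.run q (u ++ w)).isSome) : (M.run q u).isSome := by
  rw [run_append] at h
  cases hu : M.run q u with
  | none => rw [hu] at h; simp at h
  | some q' => simp

/-- The path language tree of `M`: the tree whose vertices are the words of the
language of `M`, with an edge from `w` to `w ++ [a]` whenever both belong to the
language. -/
def pathTree : RGraph where
  V := {w : List A // (M.run M.init w).isSome}
  E := {x : List A × A // (M.run M.init (x.1 ++ [x.2])).isSome}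
  s := fun x => ⟨x.1.1, M.isSome_of_append x.2⟩
  t := fun x => ⟨x.1.1 ++ [x.1.2], x.2⟩
  root := ⟨[], by simp [run]⟩

/-- The underlying rooted directed multigraph of the automaton `M`. -/
def underlying : RGraph where
  V := M.Q
  E := {x : M.Q × A // (M.δ x.1 x.2).isSome}
  s := fun x => x.1.1
  t := fun x => (M.δ x.1.1 x.1.2).get x.2
  root := M.init

/-- `M` is geometrically minimal: it has the minimal number of states among all DFAs
(over arbitrary finite nonempty alphabets) whose path language trees are isomorphic,
as unlabelled rooted trees, to the path language tree of `M`. -/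
def GeomMinimal : Prop :=
  ∀ (B : Type), Finite B → Nonempty B → ∀ N : PDFA B,
    RGraph.Iso M.pathTree N.pathTree → Nat.card M.Q ≤ Nat.card N.Q

/-- The state reached after reading the word `w` of the language. -/
def qstate (w : List A) (h : (M.run M.init w).isSome) : M.Q :=
  (M.run M.init w).get h

/-- The group of admissible permutations at the state `q`: permutations `τ` of the
alphabet fixing the letters outside `Σ(q)` and satisfying `δ(q, τ a) = δ(q, a)`. -/
def SymQ (q : M.Q) : Subgroup (Equiv.Perm A) where
  carrier := {τ | ∀ a, M.δ q (τ a) = M.δ q a ∧ (M.δ q a = none → τ a = a)}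
  one_mem' := fun _ => ⟨rfl, fun _ => rfl⟩
  mul_mem' := by
    intro τ₁ τ₂ h1 h2 a
    constructor
    · show M.δ q (τ₁ (τ₂ a)) = M.δ q a
      rw [(h1 (τ₂ a)).1, (h2 a).1]
    · intro hn
      show τ₁ (τ₂ a) = a
      rw [(h2 a).2 hn, (h1 a).2 hn]
  inv_mem' := by
    intro τ h a
    have h1 := (h (τ.symm a)).1
    rw [Equiv.apply_symm_apply] at h1
    constructor
    · show M.δ q (τ.symm a) = M.δ q a
      exact h1.symm
    · intro hn
      have h2 := (h (τ.symm a)).2 (h1.symm.trans hn)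
      rw [Equiv.apply_symm_apply] at h2
      show τ.symm a = a
      exact h2.symm

end PDFA

/-- Extending a portrait to a map on words (the first argument is the accumulated
prefix): the `i`-th letter of the image word is the image of the `i`-th letter under
the local injection at the prefix of length `i - 1`. -/
def portraitExtend {A : Type} (σ : List A → A → A) : List A → List A → List A
  | _, [] => []
  | pre, a :: w => σ pre a :: portraitExtend σ (pre ++ [a]) w

/-!
Write `q` for the image in `A` of a vertex `v` of `T`; the cone `T_v` is the tree of paths of `A`
starting at `q`. Isomorphic cones have isomorphic truncations, since isomorphisms preserve path
length. Conversely, an isomorphism of depth-`d` truncations matches out-edges level by level,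
which makes `q₁` and `q₂` `d`-step bisimilar in `A`. The `d`-step bisimilarity relations on
`Q × Q` decrease with `d`, and once two consecutive ones agree all later ones do; this happens
by depth `|Q|²`, so depth `(|Q| + 1)²` already gives full bisimilarity. As `A` is locally finite,
full bisimilarity is a bisimulation, and transporting paths along it gives `T_{v₁} ≅ T_{v₂}`.
-/

lemma exists_le_card_succ_eq_of_antitone {α : Type*} [Finite α] {s : ℕ → Set α}
    (hs : Antitone s) : ∃ k ≤ Nat.card α, s (k + 1) = s k := by
  by_contra! h
  have key : ∀ k ≤ Nat.card α + 1, (s k).ncard + k ≤ Nat.card α := by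
    intro k
    induction k with
    | zero => simpa using Set.ncard_le_card (s 0)
    | succ k ih =>
      intro hk
      have hlt : (s (k + 1)).ncard < (s k).ncard :=
        Set.ncard_lt_ncard ((hs k.le_succ).ssubset_of_ne (h k (by omega)))
      have := ih (by omega)
      omega
  have := key _ le_rfl
  omega

namespace RGraph

variable {A B C : RGraph}

lemma pathFrom_cons_iff {q : A.V} {e : A.E} {l : List A.E} :
    A.PathFrom q (e :: l) ↔ A.s e = q ∧ A.PathFrom (A.t e) l := by
  change List.IsChain _ (e :: l) ∧ _ ↔ _ ∧ List.IsChain _ l ∧ _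
  simp only [List.isChain_cons, List.head?_cons, Option.mem_def, Option.some.injEq, forall_eq']
  constructor
  · rintro ⟨⟨hl, hc⟩, he⟩
    exact ⟨he, hc, fun f hf => (hl f hf).symm⟩
  · rintro ⟨he, hc, hl⟩
    exact ⟨⟨fun f hf => (hl f hf).symm, hc⟩, he⟩

lemma pathFrom_append_iff {q : A.V} {u l : List A.E} :
    A.PathFrom q (u ++ l) ↔ A.PathFrom q u ∧ A.PathFrom (A.pathTarget q u) l := by
  induction u generalizing q with
  | nil => simp [A.pathFrom_nil]
  | cons a u ih => rw [List.cons_append, pathFrom_cons_iff, pathFrom_cons_iff, ih, pathTarget_cons,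
      and_assoc]

lemma pathFrom_singleton_iff {q : A.V} {e : A.E} : A.PathFrom q [e] ↔ A.s e = q := by
  simp [pathFrom_cons_iff, A.pathFrom_nil]

def reroot (A : RGraph) (q : A.V) : RGraph := { A with root := q }

end RGraph

namespace GraphHom

variable {A B C : RGraph}

def comp (p : GraphHom A B) (r : GraphHom B C) : GraphHom A C where
  v := r.v ∘ p.v
  e := r.e ∘ p.e
  root_eq := by simp [p.root_eq, r.root_eq]
  s_eq x := by simp [r.s_eq, p.s_eq]
  t_eq x := by simp [r.t_eq, p.t_eq]

noncomputable def inv (p : GraphHom A B) (hp : p.IsIso) : GraphHom B A where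
  v := (Equiv.ofBijective p.v hp.1).symm
  e := (Equiv.ofBijective p.e hp.2).symm
  root_eq := hp.1.injective <|
    ((Equiv.ofBijective p.v hp.1).apply_symm_apply _).trans p.root_eq.symm
  s_eq x := hp.1.injective <| by
    rw [← p.s_eq]
    exact (congrArg B.s ((Equiv.ofBijective p.e hp.2).apply_symm_apply x)).trans
      ((Equiv.ofBijective p.v hp.1).apply_symm_apply _).symm
  t_eq x := hp.1.injective <| by
    rw [← p.t_eq]
    exact (congrArg B.t ((Equiv.ofBijective p.e hp.2).apply_symm_apply x)).trans
      ((Equiv.ofBijective p.v hp.1).apply_symm_apply _).symm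

def IsLocallyBijective (p : GraphHom A B) : Prop := ∀ q, Function.Bijective (p.outMap q)

lemma IsIso.isLocallyBijective {p : GraphHom A B} (hp : p.IsIso) : p.IsLocallyBijective := by
  refine fun q => ⟨fun x y h => Subtype.ext (hp.2.injective (congrArg Subtype.val h)), ?_⟩
  rintro ⟨e', he'⟩
  obtain ⟨e, rfl⟩ := hp.2.surjective e'
  exact ⟨⟨e, hp.1.injective (by rw [← p.s_eq, he'])⟩, rfl⟩

lemma exists_pathFrom_map_eq {p : GraphHom A B} (hp : p.IsLocallyBijective) :
    ∀ {q : A.V} {l' : List B.E}, B.PathFrom (p.v q) l' →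
      ∃ l, A.PathFrom q l ∧ l.map p.e = l'
  | q, [], _ => ⟨[], A.pathFrom_nil q, rfl⟩
  | q, e' :: l', h => by
    rw [RGraph.pathFrom_cons_iff] at h
    obtain ⟨⟨e, he⟩, hee'⟩ := (hp q).2 ⟨e', h.1⟩
    have hpe : p.e e = e' := congrArg Subtype.val hee'
    obtain ⟨l, hl, rfl⟩ :=
      exists_pathFrom_map_eq hp (q := A.t e) (by rw [← p.t_eq, hpe]; exact h.2)
    exact ⟨e :: l, RGraph.pathFrom_cons_iff.2 ⟨he, hl⟩, by simp [hpe]⟩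

end GraphHom

namespace RGraph

variable {A B C : RGraph}

lemma Iso.symm (h : A.Iso B) : B.Iso A := by
  obtain ⟨p, hp⟩ := h
  exact ⟨p.inv hp, (Equiv.ofBijective p.v hp.1).symm.bijective,
    (Equiv.ofBijective p.e hp.2).symm.bijective⟩

lemma Iso.trans (h : A.Iso B) (h' : B.Iso C) : A.Iso C := by
  obtain ⟨p, hp⟩ := h
  obtain ⟨r, hr⟩ := h'
  exact ⟨p.comp r, hr.1.comp hp.1, hr.2.comp hp.2⟩

lemma iso_trunc_of_injective (p : GraphHom A B) (hv : Function.Injective p.v)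
    (hp : p.IsLocallyBijective) (v : A.V) (d : ℕ) :
    (A.trunc v d).Iso (B.trunc (p.v v) d) := by
  have he : Function.Injective p.e := by
    intro e₁ e₂ h
    have hs : A.s e₁ = A.s e₂ := hv (by rw [← p.s_eq, ← p.s_eq, h])
    exact congrArg Subtype.val ((hp (A.s e₂)).1 (a₁ := ⟨e₁, hs⟩) (a₂ := ⟨e₂, rfl⟩)
      (Subtype.ext h))
  refine ⟨{
    v := fun u => ⟨p.v u.1, by
      obtain ⟨l, hl, ht, hlen⟩ := u.2
      exact ⟨l.map p.e, p.pathFrom_map hl, by rw [p.pathTarget_map, ht], by simpa⟩⟩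
    e := fun x => ⟨p.e x.1, by
      obtain ⟨l, hl, ht, hlen⟩ := x.2
      exact ⟨l.map p.e, p.pathFrom_map hl, by rw [p.pathTarget_map, ht, p.s_eq], by simpa⟩⟩
    root_eq := rfl
    s_eq := fun x => Subtype.ext (p.s_eq x.1)
    t_eq := fun x => Subtype.ext (p.t_eq x.1) }, ⟨?_, ?_⟩, ⟨?_, ?_⟩⟩
  · exact fun u w h => Subtype.ext (hv (congrArg Subtype.val h))
  · rintro ⟨w', l', hl', rfl, hlen⟩
    obtain ⟨l, hl, rfl⟩ := GraphHom.exists_pathFrom_map_eq hp hl'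
    exact ⟨⟨_, l, hl, rfl, by simpa using hlen⟩, Subtype.ext (p.pathTarget_map v l).symm⟩
  · exact fun x y h => Subtype.ext (he (congrArg Subtype.val h))
  · rintro ⟨x', l', hl', hs, hlen⟩
    obtain ⟨l, hl, rfl⟩ := GraphHom.exists_pathFrom_map_eq hp hl'
    rw [p.pathTarget_map] at hs
    obtain ⟨⟨x, hx⟩, hxx'⟩ := (hp (A.pathTarget v l)).2 ⟨x', hs.symm⟩
    exact ⟨⟨x, l, hl, hx.symm, by simpa using hlen⟩,
      Subtype.ext (congrArg Subtype.val hxx' : p.e x = x')⟩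

def subgraphIncl (A : RGraph) (q : A.V) : GraphHom (A.subgraph q) (A.reroot q) where
  v := Subtype.val
  e := Subtype.val
  root_eq := rfl
  s_eq _ := rfl
  t_eq _ := rfl

lemma subgraphIncl_isLocallyBijective (q : A.V) : (A.subgraphIncl q).IsLocallyBijective := by
  refine fun w => ⟨fun x y h => ?_, ?_⟩
  · have := congrArg Subtype.val h
    exact Subtype.ext (Subtype.ext this)
  · rintro ⟨e, he⟩
    exact ⟨⟨⟨e, (he : A.s e = w.1) ▸ w.2⟩, Subtype.ext he⟩, rfl⟩

lemma iso_trunc_root_subgraph (q : A.V) (d : ℕ) :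
    ((A.subgraph q).trunc (A.subgraph q).root d).Iso (A.trunc q d) :=
  -- `(A.reroot q).trunc q d` is `A.trunc q d` by definition.
  iso_trunc_of_injective (A.subgraphIncl q) Subtype.val_injective
    (subgraphIncl_isLocallyBijective q) _ d

lemma iso_trunc_of_iso_subgraph {v : A.V} {w : B.V} (h : (A.subgraph v).Iso (B.subgraph w))
    (d : ℕ) : (A.trunc v d).Iso (B.trunc w d) := by
  obtain ⟨p, hp⟩ := h
  have := iso_trunc_of_injective p hp.1.injective hp.isLocallyBijective (A.subgraph v).root d
  rw [p.root_eq] at this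
  exact (iso_trunc_root_subgraph v d).symm.trans (this.trans (iso_trunc_root_subgraph w d))

/-- `d`-step bisimilarity: the unfolded form of an isomorphism between the depth-`d`
truncations of the covering trees at `q` and `q'`. -/
def Bisim (A B : RGraph) : ℕ → A.V → B.V → Prop
  | 0, _, _ => True
  | d + 1, q, q' => ∃ φ : {e // A.s e = q} ≃ {e // B.s e = q'},
      ∀ e, Bisim A B d (A.t e.1) (B.t (φ e).1)

namespace Bisim

variable {d : ℕ} {q : A.V} {q' : B.V}

lemma symm (h : A.Bisim B d q q') : B.Bisim A d q' q := by
  induction d generalizing q q' with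
  | zero => trivial
  | succ d ih =>
    obtain ⟨φ, hφ⟩ := h
    exact ⟨φ.symm, fun e => by simpa using ih (hφ (φ.symm e))⟩

lemma trans {q'' : C.V} (h : A.Bisim B d q q') (h' : B.Bisim C d q' q'') :
    A.Bisim C d q q'' := by
  induction d generalizing q q' q'' with
  | zero => trivial
  | succ d ih =>
    obtain ⟨φ, hφ⟩ := h
    obtain ⟨ψ, hψ⟩ := h'
    exact ⟨φ.trans ψ, fun e => ih (hφ e) (hψ (φ e))⟩

lemma of_succ (h : A.Bisim B (d + 1) q q') : A.Bisim B d q q' := by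
  induction d generalizing q q' with
  | zero => trivial
  | succ d ih =>
    obtain ⟨φ, hφ⟩ := h
    exact ⟨φ, fun e => ih (hφ e)⟩

lemma antitone : Antitone fun d => A.Bisim B d q q' :=
  antitone_nat_of_succ_le fun _ => of_succ

lemma succ_succ_of_forall (hd : ∀ q q', A.Bisim B d q q' → A.Bisim B (d + 1) q q')
    (h : A.Bisim B (d + 1) q q') : A.Bisim B (d + 2) q q' := by
  obtain ⟨φ, hφ⟩ := h
  exact ⟨φ, fun e => hd _ _ (hφ e)⟩

/-- Depth `|A.V × B.V|` already forces all depths: the relations `Bisim d` decrease with `d`,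
and as soon as two consecutive ones agree, all later ones do. -/
lemma of_card_le [Finite A.V] [Finite B.V] (hd : Nat.card (A.V × B.V) ≤ d)
    (h : A.Bisim B d q q') (m : ℕ) : A.Bisim B m q q' := by
  obtain ⟨k, hk, hks⟩ := exists_le_card_succ_eq_of_antitone
    (s := fun d => {x : A.V × B.V | A.Bisim B d x.1 x.2}) fun _ _ hle _ hx => antitone hle hx
  have stable : ∀ n, k ≤ n → ∀ x y, A.Bisim B n x y → A.Bisim B (n + 1) x y := by
    intro n hn
    induction n, hn using Nat.le_induction with
    | base => exact fun x y hxy => (Set.ext_iff.1 hks (x, y)).2 hxy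
    | succ n _ ih => exact fun x y => succ_succ_of_forall ih
  rcases le_total m d with hmd | hdm
  · exact antitone hmd h
  · induction m, hdm using Nat.le_induction with
    | base => exact h
    | succ m hm ih => exact stable m (by omega) _ _ ih

end Bisim

def IsBisimulation (S : A.V → B.V → Prop) : Prop :=
  ∀ q q', S q q' →
    ∃ φ : {e // A.s e = q} ≃ {e // B.s e = q'}, ∀ e, S (A.t e.1) (B.t (φ e).1)

/-- Only finitely many matchings of out-edges exist, so one of them serves for infinitely
many, hence for all, depths. -/
lemma isBisimulation_forall_bisim (hA : A.LocallyFinite) :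
    IsBisimulation fun (q : A.V) (q' : B.V) => ∀ d, A.Bisim B d q q' := by
  intro q q' h
  choose Φ hΦ using fun d => h (d + 1)
  have := hA q
  obtain ⟨φ, hφ⟩ := Finite.exists_infinite_fiber Φ
  refine ⟨φ, fun e d => ?_⟩
  obtain ⟨m, hm, hdm⟩ := (Set.infinite_coe_iff.mp hφ).exists_gt d
  rw [Set.mem_preimage, Set.mem_singleton_iff] at hm
  exact Bisim.antitone hdm.le (hm ▸ hΦ m e)

lemma bisim_of_isLocallyBijective (p : GraphHom A B) (hp : p.IsLocallyBijective) (d : ℕ)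
    (q : A.V) : A.Bisim B d q (p.v q) := by
  induction d generalizing q with
  | zero => trivial
  | succ d ih =>
    refine ⟨Equiv.ofBijective _ (hp q), fun e => ?_⟩
    show A.Bisim B d (A.t e) (B.t (p.e e))
    rw [p.t_eq]
    exact ih _

lemma uCover_isLocallyBijective : A.uCover.IsLocallyBijective := by
  refine fun l => ⟨fun x y h => ?_, fun e => ⟨⟨⟨(l, e.1), e.2⟩, rfl⟩, rfl⟩⟩
  have := congrArg Subtype.val h
  exact Subtype.ext (Subtype.ext (Prod.ext (x.2.trans y.2.symm) this))

lemma bisim_trunc_val {v : A.V} {D : ℕ} (d k : ℕ) (u : (A.trunc v D).V)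
    (hu : ∃ l, A.PathFrom v l ∧ A.pathTarget v l = u.1 ∧ l.length ≤ k) (hkd : k + d ≤ D) :
    (A.trunc v D).Bisim A d u u.1 := by
  induction d generalizing k u with
  | zero => trivial
  | succ d ih =>
    obtain ⟨l, hl, hlu, hlk⟩ := hu
    refine ⟨{
      toFun := fun x => ⟨x.1.1, congrArg Subtype.val x.2⟩
      invFun := fun e => ⟨⟨e.1, l, hl, hlu.trans e.2.symm, by omega⟩, Subtype.ext e.2⟩
      left_inv := fun _ => rfl
      right_inv := fun _ => rfl }, fun x => ih (k + 1) _ ?_ (by omega)⟩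
    have hs : A.s x.1.1 = A.pathTarget v l := (congrArg Subtype.val x.2).trans hlu.symm
    exact ⟨l ++ [x.1.1], pathFrom_append_single hl hs, by simp [trunc], by simp [hlk]⟩

lemma Bisim.of_iso_trunc {v : A.V} {w : B.V} {d : ℕ} (h : (A.trunc v d).Iso (B.trunc w d)) :
    A.Bisim B d v w := by
  obtain ⟨p, hp⟩ := h
  have hroot := bisim_of_isLocallyBijective p hp.isLocallyBijective d (A.trunc v d).root
  rw [p.root_eq] at hroot
  exact (bisim_trunc_val d 0 _ ⟨[], A.pathFrom_nil v, rfl, le_rfl⟩ (by omega)).symm.trans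
    (hroot.trans (bisim_trunc_val d 0 _ ⟨[], B.pathFrom_nil w, rfl, le_rfl⟩ (by omega)))

def coverAt (A : RGraph) (q : A.V) : RGraph where
  V := {l : List A.E // A.PathFrom q l}
  E := {x : {l : List A.E // A.PathFrom q l} × A.E // A.s x.2 = A.pathTarget q x.1.1}
  s := fun x => x.1.1
  t := fun x => ⟨x.1.1.1 ++ [x.1.2], pathFrom_append_single x.1.1.2 x.2⟩
  root := ⟨[], A.pathFrom_nil _⟩

lemma reach_coverAt_iff {q : A.V} {v w : (A.coverAt q).V} :
    (A.coverAt q).Reach v w ↔ ∃ l, A.PathFrom (A.pathTarget q v.1) l ∧ w.1 = v.1 ++ l := by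
  constructor
  · rintro ⟨L, hL, rfl⟩
    induction L generalizing v with
    | nil => exact ⟨[], A.pathFrom_nil _, by simp⟩
    | cons x L ih =>
      obtain ⟨rfl, hL'⟩ := pathFrom_cons_iff.1 hL
      obtain ⟨l, hl, hLl⟩ := ih hL'
      refine ⟨x.1.2 :: l, pathFrom_cons_iff.2 ⟨x.2, ?_⟩,
        hLl.trans (List.append_assoc _ _ _)⟩
      simpa [coverAt] using hl
  · rintro ⟨l, hl, hw⟩
    induction l using List.reverseRecOn generalizing w with
    | nil => exact Subtype.ext (by simpa using hw) ▸ reach_self _ v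
    | append_singleton l e ih =>
      obtain ⟨hl, he⟩ := pathFrom_append_iff.1 hl
      let u : (A.coverAt q).V := ⟨v.1 ++ l, pathFrom_append_iff.2 ⟨v.2, hl⟩⟩
      have hx : A.s e = A.pathTarget q u.1 := by
        rw [pathTarget_append]; exact pathFrom_singleton_iff.1 he
      have := reach_target (e := (⟨(u, e), hx⟩ : (A.coverAt q).E)) (ih hl rfl)
      convert this
      exact Subtype.ext (by simp [hw, coverAt, u])

lemma iso_coverAt_subgraph (q : A.V) (v : (A.coverAt q).V) :
    (A.coverAt (A.pathTarget q v.1)).Iso ((A.coverAt q).subgraph v) := by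
  refine ⟨{
    v := fun l => ⟨⟨v.1 ++ l.1, pathFrom_append_iff.2 ⟨v.2, l.2⟩⟩,
      reach_coverAt_iff.2 ⟨l.1, l.2, rfl⟩⟩
    e := fun x => ⟨⟨(⟨v.1 ++ x.1.1.1, pathFrom_append_iff.2 ⟨v.2, x.1.1.2⟩⟩, x.1.2), by
        rw [pathTarget_append]; exact x.2⟩, reach_coverAt_iff.2 ⟨x.1.1.1, x.1.1.2, rfl⟩⟩
    root_eq := Subtype.ext (Subtype.ext (List.append_nil _))
    s_eq := fun _ => rfl
    t_eq := fun _ => Subtype.ext (Subtype.ext (List.append_assoc _ _ _)) },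
    ⟨?_, ?_⟩, ⟨?_, ?_⟩⟩
  · intro l₁ l₂ h
    exact Subtype.ext (List.append_cancel_left (congrArg (fun z => z.1.1) h))
  · rintro ⟨w, hw⟩
    obtain ⟨l, hl, hwl⟩ := reach_coverAt_iff.1 hw
    exact ⟨⟨l, hl⟩, Subtype.ext (Subtype.ext hwl.symm)⟩
  · intro x₁ x₂ h
    have h₁ := List.append_cancel_left (congrArg (fun z => z.1.1.1.1) h)
    have h₂ := congrArg (fun z => z.1.1.2) h
    exact Subtype.ext (Prod.ext (Subtype.ext h₁) h₂)
  · rintro ⟨y, hy⟩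
    obtain ⟨l, hl, hyl⟩ := reach_coverAt_iff.1 hy
    refine ⟨⟨(⟨l, hl⟩, y.1.2), ?_⟩,
      Subtype.ext (Subtype.ext (Prod.ext (Subtype.ext hyl.symm) rfl))⟩
    show A.s y.1.2 = A.pathTarget (A.pathTarget q v.1) l
    rw [y.2, show y.1.1.1 = v.1 ++ l from hyl, pathTarget_append]

lemma coverAt_t_injective (q : A.V) : Function.Injective (A.coverAt q).t := by
  intro x y h
  obtain ⟨h₁, h₂⟩ := List.append_singleton_inj.1 (congrArg Subtype.val h)
  exact Subtype.ext (Prod.ext (Subtype.ext h₁) h₂)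

lemma coverAt_t_ne_root {q : A.V} (x : (A.coverAt q).E) :
    (A.coverAt q).t x ≠ (A.coverAt q).root :=
  fun h => by simpa [coverAt] using congrArg Subtype.val h

lemma exists_coverAt_t_eq {q : A.V} (w : (A.coverAt q).V) (hw : w ≠ (A.coverAt q).root) :
    ∃ x, (A.coverAt q).t x = w := by
  obtain ⟨l, e, hle⟩ := (List.eq_nil_or_concat' w.1).resolve_left fun h => hw (Subtype.ext h)
  have hp := w.2
  rw [hle, pathFrom_append_iff, pathFrom_singleton_iff] at hp
  exact ⟨⟨(⟨l, hp.1⟩, e), hp.2⟩, Subtype.ext hle.symm⟩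

/-- In a covering tree every edge is determined by its target, so a bijection of vertices that
fixes the root and sends one-edge extensions to one-edge extensions is an isomorphism. -/
lemma iso_coverAt_of_equiv {q : A.V} {q' : B.V} (f : (A.coverAt q).V ≃ (B.coverAt q').V)
    (hroot : f (A.coverAt q).root = (B.coverAt q').root)
    (hext : ∀ x : (A.coverAt q).E,
      ∃ g, (f ((A.coverAt q).t x)).1 = (f ((A.coverAt q).s x)).1 ++ [g]) :
    (A.coverAt q).Iso (B.coverAt q') := by
  choose g hg using hext
  let p : GraphHom (A.coverAt q) (B.coverAt q') := {
    v := f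
    e := fun x => ⟨(f ((A.coverAt q).s x), g x), by
      have := (f ((A.coverAt q).t x)).2
      rw [hg, pathFrom_append_iff, pathFrom_singleton_iff] at this
      exact this.2⟩
    root_eq := hroot
    s_eq := fun _ => rfl
    t_eq := fun x => Subtype.ext (hg x).symm }
  refine ⟨p, f.bijective, fun x y h => coverAt_t_injective q (f.injective ?_), fun y => ?_⟩
  · exact (p.t_eq x).symm.trans ((congrArg _ h).trans (p.t_eq y))
  · obtain ⟨x, hx⟩ := exists_coverAt_t_eq (f.symm ((B.coverAt q').t y))
      fun h => coverAt_t_ne_root y ((f.symm_apply_eq.1 h).trans hroot)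
    exact ⟨x, coverAt_t_injective q' ((p.t_eq x).trans ((congrArg f hx).trans
      (f.apply_symm_apply _)))⟩

section Transport

variable {S : A.V → B.V → Prop}
  (φ : ∀ q q', S q q' → {e // A.s e = q} ≃ {e // B.s e = q'})

open Classical in
noncomputable def transport : A.V → B.V → List A.E → List B.E
  | _, _, [] => []
  | q, q', e :: l =>
    if h : S q q' ∧ A.s e = q then
      (φ q q' h.1 ⟨e, h.2⟩).1 :: transport (A.t e) (B.t (φ q q' h.1 ⟨e, h.2⟩).1) l
    else []

lemma transport_cons {q : A.V} {q' : B.V} (h : S q q') {e : A.E} (he : A.s e = q)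
    (l : List A.E) : transport φ q q' (e :: l) =
      (φ q q' h ⟨e, he⟩).1 :: transport φ (A.t e) (B.t (φ q q' h ⟨e, he⟩).1) l := by
  rw [transport, dif_pos ⟨h, he⟩]

variable {φ}

lemma pathFrom_transport (hφ : ∀ q q' (h : S q q') e, S (A.t e.1) (B.t (φ q q' h e).1)) :
    ∀ {q q' l}, S q q' → A.PathFrom q l → B.PathFrom q' (transport φ q q' l)
  | _, _, [], _, _ => B.pathFrom_nil _
  | q, q', e :: l, h, hl => by
    obtain ⟨he, hl⟩ := pathFrom_cons_iff.1 hl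
    rw [transport_cons φ h he, pathFrom_cons_iff]
    exact ⟨(φ q q' h ⟨e, he⟩).2, pathFrom_transport hφ (hφ _ _ h ⟨e, he⟩) hl⟩

lemma transport_append_singleton
    (hφ : ∀ q q' (h : S q q') e, S (A.t e.1) (B.t (φ q q' h e).1)) :
    ∀ {q q' l e}, S q q' → A.PathFrom q (l ++ [e]) →
      ∃ g, transport φ q q' (l ++ [e]) = transport φ q q' l ++ [g]
  | q, q', [], e, h, hl => ⟨_, transport_cons φ h (pathFrom_singleton_iff.1 hl) []⟩
  | q, q', f :: l, e, h, hl => by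
    rw [List.cons_append, pathFrom_cons_iff] at hl
    obtain ⟨g, hg⟩ := transport_append_singleton hφ (hφ _ _ h ⟨f, hl.1⟩) hl.2
    exact ⟨g, by rw [List.cons_append, transport_cons φ h hl.1, transport_cons φ h hl.1, hg,
      List.cons_append]⟩

lemma transport_symm_transport
    (hφ : ∀ q q' (h : S q q') e, S (A.t e.1) (B.t (φ q q' h e).1)) :
    ∀ {q q' l}, (h : S q q') → A.PathFrom q l →
      transport (fun q' q h => (φ q q' h).symm) q' q (transport φ q q' l) = l
  | _, _, [], _, _ => rfl
  | q, q', e :: l, h, hl => by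
    obtain ⟨he, hl⟩ := pathFrom_cons_iff.1 hl
    rw [transport_cons φ h he,
      transport_cons (fun q' q h => (φ q q' h).symm) h (φ q q' h ⟨e, he⟩).2]
    simp only [Subtype.coe_eta, Equiv.symm_apply_apply]
    rw [transport_symm_transport hφ (hφ _ _ h ⟨e, he⟩) hl]

end Transport

lemma iso_coverAt_of_isBisimulation {S : A.V → B.V → Prop} (hS : IsBisimulation S)
    {q : A.V} {q' : B.V} (h : S q q') : (A.coverAt q).Iso (B.coverAt q') := by
  choose φ hφ using hS
  let ψ : ∀ q' q, S q q' → {e // B.s e = q'} ≃ {e // A.s e = q} :=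
    fun q' q h => (φ q q' h).symm
  have hψ : ∀ q' q (h : S q q') e, S (A.t (ψ q' q h e).1) (B.t e.1) := fun q' q h e => by
    simpa [ψ] using hφ q q' h ((φ q q' h).symm e)
  refine iso_coverAt_of_equiv
    { toFun := fun l => ⟨transport φ q q' l.1, pathFrom_transport hφ h l.2⟩
      invFun := fun l => ⟨transport ψ q' q l.1, pathFrom_transport hψ h l.2⟩
      left_inv := fun l => Subtype.ext (transport_symm_transport hφ h l.2)
      right_inv := fun l => Subtype.ext (by simpa [ψ] using transport_symm_transport hψ h l.2) }
    rfl ?_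
  rintro ⟨⟨⟨l, hl⟩, e⟩, he⟩
  exact transport_append_singleton hφ h (pathFrom_append_single hl he)

lemma iso_subgraph_of_iso_trunc [Finite A.V] (hA : A.LocallyFinite) {v₁ v₂ : A.cover.V}
    {d : ℕ} (hd : Nat.card (A.V × A.V) ≤ d)
    (h : (A.cover.trunc v₁ d).Iso (A.cover.trunc v₂ d)) :
    (A.cover.subgraph v₁).Iso (A.cover.subgraph v₂) := by
  have hcover := bisim_of_isLocallyBijective _ (uCover_isLocallyBijective (A := A)) d
  have hbisim : A.Bisim A d (A.uCover.v v₁) (A.uCover.v v₂) :=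
    (hcover v₁).symm.trans ((Bisim.of_iso_trunc h).trans (hcover v₂))
  have hiso := iso_coverAt_of_isBisimulation (isBisimulation_forall_bisim hA)
    (hbisim.of_card_le hd)
  exact (iso_coverAt_subgraph A.root v₁).symm.trans
    (hiso.trans (iso_coverAt_subgraph A.root v₂))

end RGraph

theorem stmt12_general (A : RGraph) (hfinV : Finite A.V) (hfinE : Finite A.E)
    (v₁ v₂ : A.cover.V) :
    (RGraph.Iso (A.cover.subgraph v₁) (A.cover.subgraph v₂) ↔
      ∀ d : ℕ, RGraph.Iso (A.cover.trunc v₁ d) (A.cover.trunc v₂ d)) ∧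
    (RGraph.Iso (A.cover.subgraph v₁) (A.cover.subgraph v₂) ↔
      ∃ d : ℕ, (Nat.card A.V + 1) ^ 2 ≤ d ∧
        RGraph.Iso (A.cover.trunc v₁ d) (A.cover.trunc v₂ d)) := by
  have hA : A.LocallyFinite := fun _ => Subtype.finite
  have hcard : ∀ d, (Nat.card A.V + 1) ^ 2 ≤ d → Nat.card (A.V × A.V) ≤ d := fun d hd => by
    rw [Nat.card_prod]
    nlinarith
  exact ⟨⟨fun h d => RGraph.iso_trunc_of_iso_subgraph h d,
      fun h => RGraph.iso_subgraph_of_iso_trunc hA (hcard _ le_rfl) (h _)⟩,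
    ⟨fun h => ⟨_, le_rfl, RGraph.iso_trunc_of_iso_subgraph h _⟩,
      fun ⟨d, hd, h⟩ => RGraph.iso_subgraph_of_iso_trunc hA (hcard d hd) h⟩⟩

/-- Let `A` be a finite connected graph with vertex set `Q` and
`T = T_A` its universal covering tree. For vertices `v₁, v₂` of `T` the following are
equivalent: (i) `T_{v₁} ≅ T_{v₂}`; (ii) `T_{v₁}^{(d)} ≅ T_{v₂}^{(d)}` for all `d`;
(iii) `T_{v₁}^{(d)} ≅ T_{v₂}^{(d)}` for some `d ≥ (|Q| + 1)²`. -/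
theorem stmt12 (A : RGraph) (hfinV : Finite A.V) (hfinE : Finite A.E)
    (hconn : A.Connected) (v₁ v₂ : A.cover.V) :
    (RGraph.Iso (A.cover.subgraph v₁) (A.cover.subgraph v₂) ↔
      ∀ d : ℕ, RGraph.Iso (A.cover.trunc v₁ d) (A.cover.trunc v₂ d)) ∧
    (RGraph.Iso (A.cover.subgraph v₁) (A.cover.subgraph v₂) ↔
      ∃ d : ℕ, (Nat.card A.V + 1) ^ 2 ≤ d ∧
        RGraph.Iso (A.cover.trunc v₁ d) (A.cover.trunc v₂ d)) :=
  stmt12_general A hfinV hfinE v₁ v₂
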